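/- Define f(c, n) = (2c(9n − 12) − 8c² + 28) / (6(2cn − 2c² + 3n² − 15n + 16)) for integers n ≥ 9 and 3 ≤ c ≤ ⌊√n⌋. Then f is non-decreasing in c: f(c+1, n) ≥ f(c, n) whenever 3 ≤ c and c+1 ≤ ⌊√n⌋. -/
import Mathlib


/-- The function
`f(c, n) = (2c(9n − 12) − 8c² + 28) / (6(2cn − 2c² + 3n² − 15n + 16))`
is non-decreasing in `c` for integers `n ≥ 9` and `3 ≤ c`, `c + 1 ≤ ⌊√n⌋`. -/
theorem clade_ratio_monotone (n c : ℕ) (hn : 9 ≤ n)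
    (hc : 3 ≤ c) (hcn : c + 1 ≤ Nat.sqrt n) :
    (2 * (c : ℝ) * (9 * n - 12) - 8 * (c : ℝ) ^ 2 + 28) /
        (6 * (2 * (c : ℝ) * n - 2 * (c : ℝ) ^ 2 + 3 * (n : ℝ) ^ 2 - 15 * n + 16)) ≤
      (2 * ((c : ℝ) + 1) * (9 * n - 12) - 8 * ((c : ℝ) + 1) ^ 2 + 28) /
        (6 * (2 * ((c : ℝ) + 1) * n - 2 * ((c : ℝ) + 1) ^ 2 + 3 * (n : ℝ) ^ 2 - 15 * n + 16)) := by
  have hsq : ((c : ℕ) + 1) ^ 2 ≤ n :=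
    le_trans (Nat.pow_le_pow_left hcn 2) (Nat.sqrt_le' n)
  have hsqR : ((c : ℝ) + 1) ^ 2 ≤ (n : ℝ) := by
    have := (Nat.cast_le (α := ℝ)).2 hsq
    push_cast at this; linarith
  have hcR : (3 : ℝ) ≤ (c : ℝ) := by exact_mod_cast hc
  have hnR : (9 : ℝ) ≤ (n : ℝ) := by exact_mod_cast hn
  have hd1 : (0 : ℝ) < 6 * (2 * (c : ℝ) * n - 2 * (c : ℝ) ^ 2 + 3 * (n : ℝ) ^ 2 - 15 * n + 16) := by
    nlinarith [sq_nonneg ((n:ℝ) - 3), sq_nonneg ((c:ℝ) - 3)]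
  have hd2 : (0 : ℝ) < 6 * (2 * ((c : ℝ) + 1) * n - 2 * ((c : ℝ) + 1) ^ 2 + 3 * (n : ℝ) ^ 2 - 15 * n + 16) := by
    nlinarith [sq_nonneg ((n:ℝ) - 3), sq_nonneg ((c:ℝ) - 2)]
  rw [div_le_div_iff₀ hd1 hd2]
  nlinarith [sq_nonneg ((c:ℝ) - 3), sq_nonneg ((n:ℝ) - 9), mul_nonneg (sub_nonneg.2 hcR) (sub_nonneg.2 hnR), mul_nonneg (sub_nonneg.2 hsqR) (sub_nonneg.2 hnR), mul_nonneg (sub_nonneg.2 hsqR) (sub_nonneg.2 hcR), sq_nonneg ((n:ℝ) - (c:ℝ)^2)]
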